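/- arXiv:1510.06131 — 7 statements merged into one kernel-verified Lean document; each statement's English description precedes it below -/
import Mathlib

section
/- With ∑_{i=1}^{k}[C_i] = K, pairwise intersections nonnegative, and each [C_i] satisfying adjunction [C_i]² + 2 - 2g_i = [C_i]·K: if k ≥ 2 then every g_i = 0; and if k = 1 and g_1 = 1 then [C_1]·[C_1] = [C_1]·K, i.e. [C_1]·(K - [C_1]) = 0. -/
open Finset

/-
Adjunction rewrites to `C·(K - C) = 2 - 2g`. For `k ≥ 2` the curves other than `C_i` sum to
`K - C_i`, so connectedness makes `C_i·(K - C_i)` positive and forces `g_i = 0`; for `k = 1`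
and `g = 1` the same identity gives `C·(K - C) = 0`.
-/

section Adjunction

variable {L : Type*} [AddCommGroup L] (ip : L →ₗ[ℤ] L →ₗ[ℤ] ℤ) {C K : L} {g : ℕ}

theorem apply_sub_eq_of_adjunction (hadj : ip C C + 2 - 2 * (g : ℤ) = ip C K) :
    ip C (K - C) = 2 - 2 * (g : ℤ) := by
  rw [map_sub]
  linarith

theorem genus_eq_zero_of_adjunction (hadj : ip C C + 2 - 2 * (g : ℤ) = ip C K)
    (hpos : 0 < ip C (K - C)) : g = 0 := by
  rw [apply_sub_eq_of_adjunction ip hadj] at hpos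
  omega

end Adjunction

theorem stmt_4_general {L : Type*} [AddCommGroup L]
    (ip : L →ₗ[ℤ] L →ₗ[ℤ] ℤ)
    (k : ℕ) (K : L) (C : Fin k → L) (g : Fin k → ℕ)
    (hsum : ∑ i, C i = K)
    (hadj : ∀ i, ip (C i) (C i) + 2 - 2 * (g i : ℤ) = ip (C i) K)
    (hconn : 2 ≤ k → ∀ i, 0 < ip (C i) (∑ j ∈ univ.erase i, C j)) :
    (2 ≤ k → ∀ i, g i = 0) ∧
    (k = 1 → ∀ i, g i = 1 → ip (C i) (K - C i) = 0) := by
  refine ⟨fun hk i => genus_eq_zero_of_adjunction ip (hadj i) ?_, fun _ i hg => ?_⟩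
  · have hrest : ∑ j ∈ univ.erase i, C j = K - C i := by
      rw [sum_erase_eq_sub (mem_univ i), hsum]
    simpa only [hrest] using hconn hk i
  · rw [apply_sub_eq_of_adjunction ip (hadj i), hg]
    norm_num

/-- Same setting as before, with the connectedness hypothesis: if k ≥ 2 then each
    C_i pairs positively with the sum of the others.  Conclusions: if k ≥ 2 then
    every g_i = 0; and if k = 1 and g_i = 1 then C_i·(K - C_i) = 0. -/
theorem stmt_4 {L : Type*} [AddCommGroup L]
    (ip : L →ₗ[ℤ] L →ₗ[ℤ] ℤ) (hsymm : ∀ x y : L, ip x y = ip y x)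
    (k : ℕ) (K : L) (C : Fin k → L) (g : Fin k → ℕ)
    (hsum : ∑ i, C i = K)
    (hadj : ∀ i, ip (C i) (C i) + 2 - 2 * (g i : ℤ) = ip (C i) K)
    (hnn : ∀ i j, i ≠ j → 0 ≤ ip (C i) (C j))
    (hconn : 2 ≤ k → ∀ i, 0 < ip (C i) (∑ j ∈ univ.erase i, C j)) :
    (2 ≤ k → ∀ i, g i = 0) ∧
    (k = 1 → ∀ i, g i = 1 → ip (C i) (K - C i) = 0) :=
  stmt_4_general ip k K C g hsum hadj hconn
end

section
/- In H_2(S²×S², ℤ) with basis f, s (f² = s² = 0, f·s = 1) and K = 2f + 2s, every unordered decomposition of K into k sphere classes (each satisfying adjunction C² + 2 = C·K) with pairwise nonnegative intersections and forming a cycle (each class meets exactly two others, or for k=2 the two classes meet with total intersection 2) satisfies k ≤ 4. Moreover for k = 4 the decomposition is, up to symmetry, ( f - b·s, f + b·s, s, s ) for some integer b ≥ 0. -/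
/-!
Adjunction for a class `a f + b s` reads `(a - 1)(b - 1) = 0`, so every sphere class is
`f + b s` or `a f + s`. Two classes pairing to `1` span a sublattice of odd, hence nonzero,
determinant, and the pairing is nondegenerate, so only `0` is orthogonal to both; `0` is not a
sphere class. A cycle of length `k ≥ 5` has a class orthogonal to two adjacent ones, so `k ≤ 4`.
For `k = 4` the two pairs of opposite classes are orthogonal, and two orthogonal sphere classes
are `f ± p s` or `±p f + s`; the sum `2f + 2s` forces one pair of each kind, and the pairing `1`
between neighbours forces one of the two parameters to vanish.
-/

open Finset

/-- Intersection pairing on H₂(S²×S², ℤ): basis f, s with f² = 0, s² = 0, f·s = 1. -/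
def pairSS (v w : ℤ × ℤ) : ℤ := v.1 * w.2 + v.2 * w.1

/-- The anticanonical class K = 2f + 2s. -/
def KSS : ℤ × ℤ := (2, 2)

theorem adjunction_iff (x : ℤ × ℤ) :
    pairSS x x + 2 = pairSS x KSS ↔ x.1 = 1 ∨ x.2 = 1 := by
  have key : pairSS x x + 2 - pairSS x KSS = 2 * ((x.1 - 1) * (x.2 - 1)) := by
    simp only [pairSS, KSS]; ring
  rw [← sub_eq_zero, key, mul_eq_zero, mul_eq_zero, sub_eq_zero, sub_eq_zero]
  simp

theorem eq_zero_of_pairSS_eq_zero {u v w : ℤ × ℤ} (huv : pairSS u v = 1)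
    (hwu : pairSS w u = 0) (hwv : pairSS w v = 0) : w = 0 := by
  simp only [pairSS] at huv hwu hwv
  -- the determinant has the parity of `pairSS u v`
  have hdet : u.1 * v.2 - u.2 * v.1 ≠ 0 := fun h => by omega
  have h1 : w.1 * (u.1 * v.2 - u.2 * v.1) = 0 := by linear_combination u.1 * hwv - v.1 * hwu
  have h2 : w.2 * (u.1 * v.2 - u.2 * v.1) = 0 := by linear_combination v.2 * hwu - u.2 * hwv
  exact Prod.ext ((mul_eq_zero.mp h1).resolve_right hdet) ((mul_eq_zero.mp h2).resolve_right hdet)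

theorem exists_of_pairSS_eq_zero {x y : ℤ × ℤ} (hx : x.1 = 1 ∨ x.2 = 1)
    (hy : y.1 = 1 ∨ y.2 = 1) (hxy : pairSS x y = 0) :
    ∃ p : ℤ, (x = (1, p) ∧ y = (1, -p)) ∨ (x = (p, 1) ∧ y = (-p, 1)) := by
  obtain ⟨a, b⟩ := x
  obtain ⟨c, d⟩ := y
  simp only [pairSS] at hx hy hxy
  rcases hx with rfl | rfl <;> rcases hy with rfl | rfl
  · exact ⟨b, Or.inl ⟨rfl, congrArg (Prod.mk 1) (by linarith)⟩⟩
  · obtain ⟨rfl, rfl⟩ | ⟨rfl, rfl⟩ := Int.mul_eq_neg_one_iff_eq_one_or_neg_one.mp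
      (by linear_combination hxy : b * c = -1)
    · exact ⟨1, Or.inr ⟨rfl, rfl⟩⟩
    · exact ⟨-1, Or.inl ⟨rfl, rfl⟩⟩
  · obtain ⟨rfl, rfl⟩ | ⟨rfl, rfl⟩ := Int.mul_eq_neg_one_iff_eq_one_or_neg_one.mp
      (by linear_combination hxy : a * d = -1)
    · exact ⟨1, Or.inl ⟨rfl, rfl⟩⟩
    · exact ⟨-1, Or.inr ⟨rfl, rfl⟩⟩
  · exact ⟨a, Or.inr ⟨rfl, congrArg (Prod.mk · 1) (by linarith)⟩⟩

theorem le_four_of_cycle {k : ℕ} (C : Fin k → ℤ × ℤ)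
    (hadj : ∀ i, pairSS (C i) (C i) + 2 = pairSS (C i) KSS)
    (hcyc : 3 ≤ k → ∀ i j : Fin k, i ≠ j →
      pairSS (C i) (C j) =
        if (i.val + 1) % k = j.val ∨ (j.val + 1) % k = i.val then 1 else 0) :
    k ≤ 4 := by
  by_contra! hk
  have hmod : ∀ n < k, n % k = n := fun n hn => Nat.mod_eq_of_lt hn
  have h01 : pairSS (C ⟨0, by omega⟩) (C ⟨1, by omega⟩) = 1 := by
    rw [hcyc (by omega) _ _ (by simp), if_pos (by simp [hmod 1 (by omega)])]
  have h30 : pairSS (C ⟨3, by omega⟩) (C ⟨0, by omega⟩) = 0 := by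
    rw [hcyc (by omega) _ _ (by simp), if_neg (by simp [hmod 1 (by omega), hmod 4 (by omega)])]
  have h31 : pairSS (C ⟨3, by omega⟩) (C ⟨1, by omega⟩) = 0 := by
    rw [hcyc (by omega) _ _ (by simp), if_neg (by simp [hmod 2 (by omega), hmod 4 (by omega)])]
  have h3 := (adjunction_iff _).mp (hadj ⟨3, by omega⟩)
  rw [eq_zero_of_pairSS_eq_zero h01 h30 h31] at h3
  simp at h3

def stdFour (b : ℤ) : Fin 4 → ℤ × ℤ := ![(1, -b), (1, b), (0, 1), (0, 1)]

def IsStdFour (C : Fin 4 → ℤ × ℤ) : Prop :=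
  ∃ b : ℤ, 0 ≤ b ∧ ∃ σ : Equiv.Perm (Fin 4), ∃ sw : Bool,
    ∀ i, C (σ i) = (fun v : ℤ × ℤ => if sw then v.swap else v) (stdFour b i)

namespace IsStdFour

theorem of_comp_perm {C : Fin 4 → ℤ × ℤ} (τ : Equiv.Perm (Fin 4)) (h : IsStdFour (C ∘ τ)) :
    IsStdFour C := by
  obtain ⟨b, hb, σ, sw, hσ⟩ := h
  exact ⟨b, hb, τ * σ, sw, hσ⟩

theorem of_swap {C : Fin 4 → ℤ × ℤ} (h : IsStdFour (Prod.swap ∘ C)) : IsStdFour C := by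
  obtain ⟨b, hb, σ, sw, hσ⟩ := h
  refine ⟨b, hb, σ, !sw, fun i => ?_⟩
  have h := congrArg Prod.swap (hσ i)
  cases sw <;> simpa using h

end IsStdFour

theorem isStdFour_alternating (p : ℤ) : IsStdFour ![(1, p), (0, 1), (1, -p), (0, 1)] := by
  rcases le_total 0 p with hp | hp
  · refine ⟨p, hp, Equiv.swap 0 1 * Equiv.swap 0 2, false, fun i => ?_⟩
    fin_cases i <;> rfl
  · refine ⟨-p, by omega, Equiv.swap 1 2, false, fun i => ?_⟩
    fin_cases i <;> simp [stdFour, Equiv.swap_apply_of_ne_of_ne]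

theorem isStdFour_of_mul_eq_zero {p q : ℤ} (hpq : p * q = 0) :
    IsStdFour ![(1, p), (q, 1), (1, -p), (-q, 1)] := by
  rcases mul_eq_zero.mp hpq with rfl | rfl
  · refine IsStdFour.of_swap (IsStdFour.of_comp_perm (finRotate 4) ?_)
    convert isStdFour_alternating q using 1
    funext i; fin_cases i <;> rfl
  · simpa using isStdFour_alternating p

theorem isStdFour_of_cycle {x y z w : ℤ × ℤ} (hsum : x + y + z + w = KSS)
    (hx : x.1 = 1 ∨ x.2 = 1) (hy : y.1 = 1 ∨ y.2 = 1) (hz : z.1 = 1 ∨ z.2 = 1)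
    (hw : w.1 = 1 ∨ w.2 = 1)
    (hxy : pairSS x y = 1) (hxz : pairSS x z = 0) (hyw : pairSS y w = 0) :
    IsStdFour ![x, y, z, w] := by
  obtain ⟨p, ⟨rfl, rfl⟩ | ⟨rfl, rfl⟩⟩ := exists_of_pairSS_eq_zero hx hz hxz <;>
    obtain ⟨q, ⟨rfl, rfl⟩ | ⟨rfl, rfl⟩⟩ := exists_of_pairSS_eq_zero hy hw hyw <;>
    simp only [KSS, pairSS, Prod.mk_add_mk, Prod.mk.injEq] at hsum hxy
  · omega
  · exact isStdFour_of_mul_eq_zero (by linarith)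
  · refine IsStdFour.of_swap ?_
    convert isStdFour_of_mul_eq_zero (p := p) (q := q) (by linarith) using 1
    funext i; fin_cases i <;> rfl
  · omega

theorem stmt_5_general (k : ℕ) (C : Fin k → ℤ × ℤ)
    (hsum : ∑ i, C i = KSS)
    (hadj : ∀ i, pairSS (C i) (C i) + 2 = pairSS (C i) KSS)
    (hcyc : 3 ≤ k → ∀ i j : Fin k, i ≠ j →
      pairSS (C i) (C j) =
        if (i.val + 1) % k = j.val ∨ (j.val + 1) % k = i.val then 1 else 0) :
    k ≤ 4 ∧
    ∀ (h4 : k = 4), ∃ b : ℤ, 0 ≤ b ∧ ∃ σ : Equiv.Perm (Fin k), ∃ sw : Bool,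
      ∀ i : Fin 4, C (σ (Fin.cast h4.symm i)) =
        (fun v : ℤ × ℤ => if sw then v.swap else v)
          (![(1, -b), (1, b), (0, 1), (0, 1)] i) := by
  refine ⟨le_four_of_cycle C hadj hcyc, fun h4 => ?_⟩
  subst h4
  have hC : C = ![C 0, C 1, C 2, C 3] := by funext i; fin_cases i <;> rfl
  have hsph := fun i => (adjunction_iff (C i)).mp (hadj i)
  have h01 := hcyc (by norm_num) 0 1 (by decide)
  have h02 := hcyc (by norm_num) 0 2 (by decide)
  have h13 := hcyc (by norm_num) 1 3 (by decide)
  rw [if_pos (by decide)] at h01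
  rw [if_neg (by decide)] at h02 h13
  rw [Fin.sum_univ_four] at hsum
  rw [hC]
  exact isStdFour_of_cycle hsum (hsph 0) (hsph 1) (hsph 2) (hsph 3) h01 h02 h13

/-- Any decomposition of K = 2f + 2s into k ≥ 2 sphere classes with pairwise
    nonnegative intersections forming a cycle (consecutive pairings 1, others 0 for
    k ≥ 3; total pairing 2 for k = 2) has k ≤ 4, and for k = 4 the decomposition is,
    up to permutation and the symmetry swapping f and s,
    (f - b·s, f + b·s, s, s) for some integer b ≥ 0. -/
theorem stmt_5 (k : ℕ) (hk : 2 ≤ k) (C : Fin k → ℤ × ℤ)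
    (hsum : ∑ i, C i = KSS)
    (hadj : ∀ i, pairSS (C i) (C i) + 2 = pairSS (C i) KSS)
    (hnn : ∀ i j, i ≠ j → 0 ≤ pairSS (C i) (C j))
    (hcyc2 : k = 2 → ∀ i j, i ≠ j → pairSS (C i) (C j) = 2)
    (hcyc : 3 ≤ k → ∀ i j : Fin k, i ≠ j →
      pairSS (C i) (C j) =
        if (i.val + 1) % k = j.val ∨ (j.val + 1) % k = i.val then 1 else 0) :
    k ≤ 4 ∧
    ∀ (h4 : k = 4), ∃ b : ℤ, 0 ≤ b ∧ ∃ σ : Equiv.Perm (Fin k), ∃ sw : Bool,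
      ∀ i : Fin 4, C (σ (Fin.cast h4.symm i)) =
        (fun v : ℤ × ℤ => if sw then v.swap else v)
          (![(1, -b), (1, b), (0, 1), (0, 1)] i) :=
  stmt_5_general k C hsum hadj hcyc
end

section
/- In H_2(ℂP² # conj(ℂP²), ℤ) with f² = 0, f·s = 1, s² = 1 and K = f + 2s, every 3-cycle decomposition K = [C_1] + [C_2] + [C_3] into sphere classes with [C_i]·[C_j] = 1 for all i ≠ j is, up to permutation, ([C_1],[C_2],[C_3]) = (a f + s, -a f + s, f) for some integer a. -/
/-!
Writing a class as `x f + y s`, the adjunction equation `C·C + 2 = C·K` factors as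
`(y - 1)(2x + y - 2) = 0`. The `s`-coefficients of the three classes add up to `2`, so some
class has `y ≠ 1`, hence `2x + y = 2`; comparing the sums of `x`, `y` and `2x + y` over the
three classes (the last is `4`) then leaves only `(a, 1), (-a, 1), (1, 0)`.
-/

/-- Intersection pairing on H₂(ℂP² # conj(ℂP²), ℤ): f² = 0, f·s = 1, s² = 1. -/
def pairF (v w : ℤ × ℤ) : ℤ := v.1 * w.2 + v.2 * w.1 + v.2 * w.2

/-- The anticanonical class K = f + 2s. -/
def KF : ℤ × ℤ := (1, 2)

lemma pairF_self_add_two_eq_pairF_KF_iff (v : ℤ × ℤ) :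
    pairF v v + 2 = pairF v KF ↔ v.2 = 1 ∨ 2 * v.1 + v.2 = 2 := by
  have factor : pairF v v + 2 - pairF v KF = (v.2 - 1) * (2 * v.1 + v.2 - 2) := by
    simp only [pairF, KF]
    ring
  rw [← sub_eq_zero, factor, mul_eq_zero, sub_eq_zero, sub_eq_zero]

lemma exists_snd_ne_one_of_sum_eq_KF {C : Fin 3 → ℤ × ℤ} (hsum : ∑ i, C i = KF) :
    ∃ i, (C i).2 ≠ 1 := by
  by_contra! h
  have := congrArg Prod.snd hsum
  simp [Prod.snd_sum, h, KF] at this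

lemma eq_of_add_add_eq_KF {u v w : ℤ × ℤ} (hu : pairF u u + 2 = pairF u KF)
    (hv : pairF v v + 2 = pairF v KF) (hw : pairF w w + 2 = pairF w KF)
    (hsum : u + v + w = KF) (hw₂ : w.2 ≠ 1) :
    u = (u.1, 1) ∧ v = (-u.1, 1) ∧ w = (1, 0) := by
  rw [pairF_self_add_two_eq_pairF_KF_iff] at hu hv hw
  have h₁ : u.1 + v.1 + w.1 = 1 := congrArg Prod.fst hsum
  have h₂ : u.2 + v.2 + w.2 = 2 := congrArg Prod.snd hsum
  refine ⟨Prod.ext rfl ?_, Prod.ext ?_ ?_, Prod.ext ?_ ?_⟩ <;> dsimp only <;> omega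

theorem stmt_7_general (C : Fin 3 → ℤ × ℤ)
    (hadj : ∀ i, pairF (C i) (C i) + 2 = pairF (C i) KF)
    (hsum : ∑ i, C i = KF) :
    ∃ σ : Equiv.Perm (Fin 3), ∃ a : ℤ,
      C (σ 0) = (a, 1) ∧ C (σ 1) = (-a, 1) ∧ C (σ 2) = (1, 0) := by
  obtain ⟨i, hi⟩ := exists_snd_ne_one_of_sum_eq_KF hsum
  set σ := Equiv.swap i 2
  have hσ : C (σ 0) + C (σ 1) + C (σ 2) = KF := by
    rw [← hsum, ← Equiv.sum_comp σ C, Fin.sum_univ_three]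
  obtain ⟨h₀, h₁, h₂⟩ :=
    eq_of_add_add_eq_KF (hadj _) (hadj _) (hadj _) hσ (by simpa [σ] using hi)
  exact ⟨σ, _, h₀, h₁, h₂⟩

/-- Every 3-cycle decomposition K = C₁ + C₂ + C₃ into sphere classes with all
    pairwise intersections 1 is, up to permutation, (a f + s, -a f + s, f). -/
theorem stmt_7 (C : Fin 3 → ℤ × ℤ)
    (hadj : ∀ i, pairF (C i) (C i) + 2 = pairF (C i) KF)
    (hsum : ∑ i, C i = KF)
    (hint : ∀ i j, i ≠ j → pairF (C i) (C j) = 1) :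
    ∃ σ : Equiv.Perm (Fin 3), ∃ a : ℤ,
      C (σ 0) = (a, 1) ∧ C (σ 1) = (-a, 1) ∧ C (σ 2) = (1, 0) :=
  stmt_7_general C hadj hsum
end

section
/- In the lattice with basis f, s (f² = 0, f·s = 1, s² = 1) and K = f + 2s, there is no decomposition of K into 5 or more sphere classes forming a cycle (consecutive pairings 1, nonconsecutive pairings 0). -/
/-!
The pairing is nondegenerate on a lattice of rank two. In a cycle of length at least five,
`C₀` pairs to `1` with `C₁`, so `C₀ ≠ 0`, and it is orthogonal to both `C₂` and `C₃`; hence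
`C₂` and `C₃` are parallel. Since `C₁` pairs to `1` with `C₂` but to `0` with `C₃`, this forces
`C₃ = 0`, which contradicts `C₃ · C₄ = 1`.
-/

section CyclePairing

variable {α : Type*} {B : α → α → ℤ} {k : ℕ} {C : Fin k → α}

theorem cycle_pairing_succ
    (hcyc : ∀ i j : Fin k, i ≠ j →
      B (C i) (C j) = if (i.val + 1) % k = j.val ∨ (j.val + 1) % k = i.val then 1 else 0)
    {a : ℕ} (ha : a + 1 < k) :
    B (C ⟨a, by omega⟩) (C ⟨a + 1, ha⟩) = 1 := by
  rw [hcyc _ _ (by simp [Fin.ext_iff]), if_pos (Or.inl (Nat.mod_eq_of_lt ha))]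

theorem cycle_pairing_eq_zero
    (hcyc : ∀ i j : Fin k, i ≠ j →
      B (C i) (C j) = if (i.val + 1) % k = j.val ∨ (j.val + 1) % k = i.val then 1 else 0)
    {a b : ℕ} (hab : a + 1 < b) (hb : b + 1 < k) :
    B (C ⟨a, by omega⟩) (C ⟨b, by omega⟩) = 0 := by
  rw [hcyc _ _ (by simp [Fin.ext_iff]; omega), if_neg]
  simp only [Nat.mod_eq_of_lt hb, Nat.mod_eq_of_lt (show a + 1 < k by omega)]
  omega

end CyclePairing

theorem pairF_zero_left (v : ℤ × ℤ) : pairF 0 v = 0 := by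
  simp [pairF]

theorem cross_eq_zero_of_pairF_eq_zero {u v w : ℤ × ℤ} (hu : u ≠ 0)
    (hv : pairF u v = 0) (hw : pairF u w = 0) : v.1 * w.2 - v.2 * w.1 = 0 := by
  unfold pairF at hv hw
  have h₂ : u.2 * (v.1 * w.2 - v.2 * w.1) = 0 := by linear_combination w.2 * hv - v.2 * hw
  have h₁₂ : (u.1 + u.2) * (v.1 * w.2 - v.2 * w.1) = 0 := by
    linear_combination v.1 * hw - w.1 * hv
  by_contra hvw
  have hu₂ : u.2 = 0 := (mul_eq_zero.1 h₂).resolve_right hvw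
  have hu₁ : u.1 = 0 := by linarith [(mul_eq_zero.1 h₁₂).resolve_right hvw]
  exact hu (Prod.ext hu₁ hu₂)

theorem pairF_smul_eq_of_cross_eq_zero (x : ℤ × ℤ) {v w : ℤ × ℤ}
    (h : v.1 * w.2 - v.2 * w.1 = 0) : pairF x v • w = pairF x w • v := by
  ext <;> simp only [Prod.smul_fst, Prod.smul_snd, smul_eq_mul, pairF]
  · linear_combination (-x.2 - x.1) * h
  · linear_combination x.2 * h

theorem false_of_pairF_cycle_segment {v₀ v₁ v₂ v₃ v₄ : ℤ × ℤ}
    (h₀₁ : pairF v₀ v₁ = 1) (h₀₂ : pairF v₀ v₂ = 0) (h₀₃ : pairF v₀ v₃ = 0)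
    (h₁₂ : pairF v₁ v₂ = 1) (h₁₃ : pairF v₁ v₃ = 0) (h₃₄ : pairF v₃ v₄ = 1) : False := by
  have hv₀ : v₀ ≠ 0 := by
    rintro rfl
    simp [pairF_zero_left] at h₀₁
  have hv₃ : v₃ = 0 := by
    simpa [h₁₂, h₁₃] using
      pairF_smul_eq_of_cross_eq_zero v₁ (cross_eq_zero_of_pairF_eq_zero hv₀ h₀₂ h₀₃)
  simp [hv₃, pairF_zero_left] at h₃₄

theorem stmt_8_general (k : ℕ) (hk : 5 ≤ k) (C : Fin k → ℤ × ℤ)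
    (hcyc : ∀ i j : Fin k, i ≠ j →
      pairF (C i) (C j) =
        if (i.val + 1) % k = j.val ∨ (j.val + 1) % k = i.val then 1 else 0) :
    False :=
  false_of_pairF_cycle_segment
    (cycle_pairing_succ hcyc (a := 0) (by omega))
    (cycle_pairing_eq_zero hcyc (a := 0) (b := 2) (by omega) (by omega))
    (cycle_pairing_eq_zero hcyc (a := 0) (b := 3) (by omega) (by omega))
    (cycle_pairing_succ hcyc (a := 1) (by omega))
    (cycle_pairing_eq_zero hcyc (a := 1) (b := 3) (by omega) (by omega))
    (cycle_pairing_succ hcyc (a := 3) (by omega))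

/-- There is no decomposition of K = f + 2s into k ≥ 5 sphere classes forming a
    cycle (consecutive pairings 1, nonconsecutive pairings 0). -/
theorem stmt_8 (k : ℕ) (hk : 5 ≤ k) (C : Fin k → ℤ × ℤ)
    (hadj : ∀ i, pairF (C i) (C i) + 2 = pairF (C i) KF)
    (hsum : ∑ i, C i = KF)
    (hcyc : ∀ i j : Fin k, i ≠ j →
      pairF (C i) (C j) =
        if (i.val + 1) % k = j.val ∨ (j.val + 1) % k = i.val then 1 else 0) :
    False :=
  stmt_8_general k hk C hcyc
end

section
/- In H_2(S²×S², ℤ) (f² = s² = 0, f·s = 1, K = 2f + 2s), there is no k-cycle decomposition of K into sphere classes with k ≥ 5. -/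
theorem Fin.val_add_one_mod {k : ℕ} (i : Fin k) :
    (i.val + 1) % k = if i.val + 1 = k then 0 else i.val + 1 := by
  split_ifs with h
  · simp [h]
  · exact Nat.mod_eq_of_lt (by omega)

def CycleAdj (k : ℕ) (i j : Fin k) : Prop :=
  (i.val + 1) % k = j.val ∨ (j.val + 1) % k = i.val

namespace CycleAdj

variable {k : ℕ} {i j l : Fin k}

theorem iff_val : CycleAdj k i j ↔ i.val + 1 = j.val ∨ j.val + 1 = i.val ∨
    (i.val + 1 = k ∧ j.val = 0) ∨ (j.val + 1 = k ∧ i.val = 0) := by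
  rw [CycleAdj, i.val_add_one_mod, j.val_add_one_mod]
  have := i.isLt
  have := j.isLt
  split_ifs <;> omega

theorem not_triangle (hk : 4 ≤ k) (h₁ : CycleAdj k i j) (h₂ : CycleAdj k j l)
    (h₃ : CycleAdj k i l) : False := by
  rw [iff_val] at h₁ h₂ h₃
  omega

theorem eq_or_eq_or_eq_of_adj {y : Fin k} (h₁ : CycleAdj k i y) (h₂ : CycleAdj k j y)
    (h₃ : CycleAdj k l y) : i = j ∨ j = l ∨ i = l := by
  rw [iff_val] at h₁ h₂ h₃
  simp only [Fin.ext_iff]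
  have := y.isLt
  omega

end CycleAdj

theorem Set.nontrivial_setOf_and {α : Type*} [Finite α] (hα : 4 ≤ Nat.card α) {p q : α → Prop}
    (hp : {a | ¬p a}.Subsingleton) (hq : {a | ¬q a}.Subsingleton) :
    {a | p a ∧ q a}.Nontrivial := by
  rw [← Set.one_lt_ncard_iff_nontrivial]
  have hcompl : {a | p a ∧ q a}ᶜ = {a | ¬p a} ∪ {a | ¬q a} := by
    ext a
    simp only [Set.mem_compl_iff, Set.mem_ofPred_eq, Set.mem_union, not_and_or]
  have hsum := Set.ncard_add_ncard_compl {a | p a ∧ q a}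
  have hunion := Set.ncard_union_le {a | ¬p a} {a | ¬q a}
  rw [← hcompl] at hunion
  have := Set.ncard_le_one_iff_subsingleton.mpr hp
  have := Set.ncard_le_one_iff_subsingleton.mpr hq
  omega

theorem pairSS_swap (v w : ℤ × ℤ) : pairSS v.swap w.swap = pairSS v w := by
  simp only [pairSS, Prod.fst_swap, Prod.snd_swap]
  ring

/-- The adjunction formula for an embedded sphere in class `v`. -/
def IsSphereClass (v : ℤ × ℤ) : Prop := pairSS v v + 2 = pairSS v KSS

namespace IsSphereClass

variable {v w : ℤ × ℤ}

theorem fst_eq_one_or_snd_eq_one (hv : IsSphereClass v) : v.1 = 1 ∨ v.2 = 1 := by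
  have h : 2 * ((v.1 - 1) * (v.2 - 1)) = 0 := by
    simp only [IsSphereClass, pairSS, KSS] at hv
    linear_combination hv
  rcases mul_eq_zero.mp ((mul_eq_zero.mp h).resolve_left two_ne_zero) with h | h
  · exact .inl (by linarith)
  · exact .inr (by linarith)

theorem swap (hv : IsSphereClass v) : IsSphereClass v.swap := by
  show pairSS v.swap v.swap + 2 = pairSS v.swap KSS.swap
  rwa [pairSS_swap, pairSS_swap]

theorem snd_eq_one_and_fst_add_fst_eq_zero (hv : IsSphereClass v) (hw : IsSphereClass w)
    (h : pairSS v w = 0) (hv₁ : v.1 ≠ 1) : w.2 = 1 ∧ v.1 + w.1 = 0 := by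
  have hv₂ : v.2 = 1 := hv.fst_eq_one_or_snd_eq_one.resolve_left hv₁
  simp only [pairSS, hv₂, one_mul] at h
  rcases hw.fst_eq_one_or_snd_eq_one with hw₁ | hw₂
  · rcases Int.eq_one_or_neg_one_of_mul_eq_neg_one' (by linarith : v.1 * w.2 = -1) with
      ⟨hv₁', -⟩ | ⟨hv₁', hw₂⟩
    · exact absurd hv₁' hv₁
    · exact ⟨hw₂, by rw [hv₁', hw₁]; norm_num⟩
  · exact ⟨hw₂, by simpa [hw₂] using h⟩

end IsSphereClass

structure IsCycleDecomposition (k : ℕ) (C : Fin k → ℤ × ℤ) : Prop where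
  isSphereClass : ∀ i, IsSphereClass (C i)
  sum_eq : ∑ i, C i = KSS
  pairSS_of_adj : ∀ i j, i ≠ j → CycleAdj k i j → pairSS (C i) (C j) = 1
  pairSS_of_not_adj : ∀ i j, i ≠ j → ¬CycleAdj k i j → pairSS (C i) (C j) = 0

namespace IsCycleDecomposition

variable {k : ℕ} {C : Fin k → ℤ × ℤ}

theorem sum_fst (hC : IsCycleDecomposition k C) : ∑ i, (C i).1 = 2 := by
  rw [← Prod.fst_sum, hC.sum_eq]
  rfl

theorem sum_snd (hC : IsCycleDecomposition k C) : ∑ i, (C i).2 = 2 := by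
  rw [← Prod.snd_sum, hC.sum_eq]
  rfl

theorem swap (hC : IsCycleDecomposition k C) : IsCycleDecomposition k (Prod.swap ∘ C) where
  isSphereClass i := (hC.isSphereClass i).swap
  sum_eq := Prod.ext ((Prod.fst_sum ..).trans hC.sum_snd) ((Prod.snd_sum ..).trans hC.sum_fst)
  pairSS_of_adj i j hij h := (pairSS_swap _ _).trans (hC.pairSS_of_adj i j hij h)
  pairSS_of_not_adj i j hij h := (pairSS_swap _ _).trans (hC.pairSS_of_not_adj i j hij h)

theorem sum_fst_sub_one (hC : IsCycleDecomposition k C) : ∑ i, ((C i).1 - 1) = 2 - k := by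
  simp [Finset.sum_sub_distrib, hC.sum_fst]

theorem exists_fst_ne_one (hC : IsCycleDecomposition k C) (hk : k ≠ 2) : ∃ i, (C i).1 ≠ 1 := by
  have hne : ∑ i, ((C i).1 - 1) ≠ 0 := by
    rw [hC.sum_fst_sub_one]
    omega
  obtain ⟨i, -, hi⟩ := Finset.exists_ne_zero_of_sum_ne_zero hne
  exact ⟨i, sub_ne_zero.mp hi⟩

theorem cycleAdj_of_fst_ne_one_of_snd_ne_one (hC : IsCycleDecomposition k C) {x y : Fin k}
    (hx : (C x).1 ≠ 1) (hy : (C y).2 ≠ 1) : CycleAdj k x y := by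
  have hxy : x ≠ y := by
    rintro rfl
    exact (hC.isSphereClass x).fst_eq_one_or_snd_eq_one.elim hx hy
  by_contra hna
  exact hy ((hC.isSphereClass x).snd_eq_one_and_fst_add_fst_eq_zero (hC.isSphereClass y)
    (hC.pairSS_of_not_adj x y hxy hna) hx).1

theorem subsingleton_fst_ne_one (hC : IsCycleDecomposition k C) (hk : 5 ≤ k) :
    {i | (C i).1 ≠ 1}.Subsingleton := by
  intro x₁ hx₁ x₂ hx₂
  by_contra hne
  obtain ⟨y, hy⟩ := hC.swap.exists_fst_ne_one (by omega)
  have hadj₁ := hC.cycleAdj_of_fst_ne_one_of_snd_ne_one hx₁ hy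
  have hadj₂ := hC.cycleAdj_of_fst_ne_one_of_snd_ne_one hx₂ hy
  have hna : ¬CycleAdj k x₁ x₂ := fun h => CycleAdj.not_triangle (by omega) h hadj₂ hadj₁
  have hcancel := ((hC.isSphereClass x₁).snd_eq_one_and_fst_add_fst_eq_zero
    (hC.isSphereClass x₂) (hC.pairSS_of_not_adj x₁ x₂ hne hna) hx₁).2
  have hrest : ∀ i, i ≠ x₁ ∧ i ≠ x₂ → (C i).1 - 1 = 0 := by
    rintro i ⟨hi₁, hi₂⟩
    by_contra hi
    have hadj := hC.cycleAdj_of_fst_ne_one_of_snd_ne_one (sub_ne_zero.mp hi) hy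
    rcases CycleAdj.eq_or_eq_or_eq_of_adj hadj hadj₁ hadj₂ with h | h | h <;> contradiction
  have hsum := hC.sum_fst_sub_one
  rw [Fintype.sum_eq_add x₁ x₂ hne hrest] at hsum
  omega

end IsCycleDecomposition

/-- There is no decomposition of K = 2f + 2s into k ≥ 5 sphere classes forming a
    cycle (consecutive pairings 1, nonconsecutive pairings 0). -/
theorem stmt_9 (k : ℕ) (hk : 5 ≤ k) (C : Fin k → ℤ × ℤ)
    (hadj : ∀ i, pairSS (C i) (C i) + 2 = pairSS (C i) KSS)
    (hsum : ∑ i, C i = KSS)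
    (hcyc : ∀ i j : Fin k, i ≠ j →
      pairSS (C i) (C j) =
        if (i.val + 1) % k = j.val ∨ (j.val + 1) % k = i.val then 1 else 0) :
    False := by
  have hC : IsCycleDecomposition k C :=
    ⟨hadj, hsum, fun i j hij h => (hcyc i j hij).trans (if_pos h),
      fun i j hij h => (hcyc i j hij).trans (if_neg h)⟩
  obtain ⟨i, hi, j, hj, hij⟩ : {i | (C i).1 = 1 ∧ (C i).2 = 1}.Nontrivial :=
    Set.nontrivial_setOf_and (by rw [Nat.card_fin]; omega) (hC.subsingleton_fst_ne_one hk)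
      (hC.swap.subsingleton_fst_ne_one hk)
  have hpair : pairSS (C i) (C j) = 2 := by
    simp only [pairSS, hi.1, hi.2, hj.1, hj.2]
    norm_num
  by_cases h : CycleAdj k i j
  · have := hC.pairSS_of_adj i j hij h
    omega
  · have := hC.pairSS_of_not_adj i j hij h
    omega
end

section
/- Let V be a finite-dimensional real vector space with two linear complex structures J₀, J₁ (J_i² = −Id) and bilinear forms ω₀, ω₁ such that ω_i(v, J_i v) > 0 for all nonzero v (compatibility positivity). Let W ⊂ V be a subspace invariant under both J₀ and J₁, and β a bilinear form on V/W with β(π(v), π(J₀ v)) > 0 and β(π(v), π(J₁ v)) > 0 for all v ∉ W, where π: V → V/W is the projection. Then, since the unit sphere of V is compact, there exists K ≥ 0 such that for all t ∈ [0,1] and all nonzero v ∈ V, ((1−t)ω₀ + tω₁ + K·π*β)(v, J₀ v) > 0 whenever v ∉ W, and ((1−t)ω₀ + tω₁)(v, J₀ v) > 0 for v ∈ W, v ≠ 0. -/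
/-!
Put `qᵢ v = ωᵢ v (J₀ v)` and `p v = β (π v) (π (J₀ v))`. Then `p ≥ 0`, `p` vanishes exactly on `W`,
and both `qᵢ` are positive on `W ∖ 0`. All three are quadratic, so it suffices to work on a unit
sphere; it is compact and covered by the increasing open sets `{qᵢ + n p > 0}`, `n ∈ ℕ`, so a single
`n` works for `qᵢ`. As `p ≥ 0`, the larger of the constants for `q₀` and `q₁` works for every convex
combination `(1 - t) q₀ + t q₁`.
-/

open Set

theorem IsCompact.exists_pos_add_mul {X : Type*} [TopologicalSpace X] {S : Set X}
    (hS : IsCompact S) {q p : X → ℝ} (hq : Continuous q) (hp : Continuous p)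
    (hp_nonneg : ∀ x, 0 ≤ p x) (h : ∀ x ∈ S, p x = 0 → 0 < q x) :
    ∃ K : ℝ, 0 ≤ K ∧ ∀ x ∈ S, 0 < q x + K * p x := by
  let U : ℕ → Set X := fun n => {x | 0 < q x + n * p x}
  have hU_open : ∀ n, IsOpen (U n) := fun n =>
    isOpen_lt continuous_const (hq.add (continuous_const.mul hp))
  have hU_mono : Monotone U := fun m n hmn x (hx : 0 < q x + m * p x) =>
    show 0 < q x + n * p x by
      have : (m : ℝ) * p x ≤ n * p x := by gcongr; exact hp_nonneg x
      linarith
  have hS_cover : S ⊆ ⋃ n, U n := by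
    intro x hx
    rcases (hp_nonneg x).eq_or_lt with hpx | hpx
    · exact mem_iUnion.2 ⟨0, by simpa [U] using h x hx hpx.symm⟩
    · obtain ⟨n, hn⟩ := exists_nat_gt (-q x / p x)
      have := (div_lt_iff₀ hpx).1 hn
      exact mem_iUnion.2 ⟨n, show 0 < q x + n * p x by linarith⟩
  obtain ⟨n, hn⟩ := hS.elim_directed_cover U hU_open hS_cover hU_mono.directed_le
  exact ⟨n, n.cast_nonneg, hn⟩

section Normed

variable {E : Type*} [NormedAddCommGroup E] [NormedSpace ℝ E] [FiniteDimensional ℝ E]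

theorem LinearMap.continuous_apply_self (B : E →ₗ[ℝ] E →ₗ[ℝ] ℝ) : Continuous fun x => B x x := by
  simpa using ((LinearMap.toContinuousLinearMap.toLinearMap ∘ₗ B).continuous_of_finiteDimensional
    (E := E) (F' := E →L[ℝ] ℝ)).clm_apply continuous_id

theorem LinearMap.exists_pos_apply_self_add_mul_of_normed (B C : E →ₗ[ℝ] E →ₗ[ℝ] ℝ)
    (hC_nonneg : ∀ v, 0 ≤ C v v) (h : ∀ v ≠ 0, C v v = 0 → 0 < B v v) :
    ∃ K : ℝ, 0 ≤ K ∧ ∀ v ≠ 0, 0 < B v v + K * C v v := by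
  obtain ⟨K, hK, hsphere⟩ := (isCompact_sphere (0 : E) 1).exists_pos_add_mul
    B.continuous_apply_self C.continuous_apply_self hC_nonneg
    fun x hx => h x (ne_zero_of_mem_unit_sphere ⟨x, hx⟩)
  refine ⟨K, hK, fun v hv => ?_⟩
  have hv_norm : 0 < ‖v‖ := norm_pos_iff.2 hv
  have hscaled := hsphere (‖v‖⁻¹ • v) (by simp [norm_smul, hv_norm.ne'])
  have hhom : B (‖v‖⁻¹ • v) (‖v‖⁻¹ • v) + K * C (‖v‖⁻¹ • v) (‖v‖⁻¹ • v)
      = (‖v‖⁻¹ * ‖v‖⁻¹) * (B v v + K * C v v) := by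
    simp only [map_smul, LinearMap.smul_apply, smul_eq_mul]; ring
  rw [hhom] at hscaled
  exact pos_of_mul_pos_right hscaled (by positivity)

end Normed

theorem LinearMap.exists_pos_apply_self_add_mul {V : Type*} [AddCommGroup V] [Module ℝ V]
    [FiniteDimensional ℝ V] (B C : V →ₗ[ℝ] V →ₗ[ℝ] ℝ)
    (hC_nonneg : ∀ v, 0 ≤ C v v) (h : ∀ v ≠ 0, C v v = 0 → 0 < B v v) :
    ∃ K : ℝ, 0 ≤ K ∧ ∀ v ≠ 0, 0 < B v v + K * C v v := by
  let e : V ≃ₗ[ℝ] EuclideanSpace ℝ (Fin (Module.finrank ℝ V)) := .ofFinrankEq _ _ (by simp)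
  obtain ⟨K, hK, hpos⟩ := exists_pos_apply_self_add_mul_of_normed
    (B.compl₁₂ e.symm.toLinearMap e.symm.toLinearMap)
    (C.compl₁₂ e.symm.toLinearMap e.symm.toLinearMap) (fun x => hC_nonneg _)
    fun x hx => h _ (e.symm.map_ne_zero_iff.2 hx)
  exact ⟨K, hK, fun v hv => by simpa using hpos (e v) (e.map_ne_zero_iff.2 hv)⟩

theorem stmt_13_general {V : Type*} [AddCommGroup V] [Module ℝ V] [FiniteDimensional ℝ V]
    (J₀ : V →ₗ[ℝ] V)
    (ω₀ ω₁ : V →ₗ[ℝ] V →ₗ[ℝ] ℝ)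
    (W : Submodule ℝ V)
    (β : (V ⧸ W) →ₗ[ℝ] (V ⧸ W) →ₗ[ℝ] ℝ)
    (hβ₀ : ∀ v : V, v ∉ W → 0 < β (W.mkQ v) (W.mkQ (J₀ v)))
    (hWpos₀ : ∀ w ∈ W, w ≠ 0 → 0 < ω₀ w (J₀ w))
    (hWpos₁ : ∀ w ∈ W, w ≠ 0 → 0 < ω₁ w (J₀ w)) :
    ∃ K : ℝ, 0 ≤ K ∧ ∀ t ∈ Set.Icc (0 : ℝ) 1, ∀ v : V, v ≠ 0 →
      (v ∉ W →
        0 < (1 - t) * ω₀ v (J₀ v) + t * ω₁ v (J₀ v)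
            + K * β (W.mkQ v) (W.mkQ (J₀ v))) ∧
      (v ∈ W → 0 < (1 - t) * ω₀ v (J₀ v) + t * ω₁ v (J₀ v)) := by
  let P := (β.compl₁₂ W.mkQ W.mkQ).compl₂ J₀
  have hP_nonneg (v : V) : 0 ≤ P v v := by
    by_cases hv : v ∈ W
    · simp [P, (Submodule.Quotient.mk_eq_zero W).2 hv]
    · exact (hβ₀ v hv).le
  have hK_exists (ω : V →ₗ[ℝ] V →ₗ[ℝ] ℝ) (hω : ∀ w ∈ W, w ≠ 0 → 0 < ω w (J₀ w)) :
      ∃ K : ℝ, 0 ≤ K ∧ ∀ v ≠ 0, 0 < ω v (J₀ v) + K * P v v :=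
    (ω.compl₂ J₀).exists_pos_apply_self_add_mul P hP_nonneg fun v hv hPv =>
      hω v (not_not.1 fun hvW => (hβ₀ v hvW).ne' hPv) hv
  obtain ⟨K₀, hK₀, hpos₀⟩ := hK_exists ω₀ hWpos₀
  obtain ⟨K₁, hK₁, hpos₁⟩ := hK_exists ω₁ hWpos₁
  have hconvex {a b : ℝ} (ha : 0 < a) (hb : 0 < b) {t : ℝ} (ht : t ∈ Icc (0 : ℝ) 1) :
      0 < (1 - t) * a + t * b := by
    simpa using convex_Ioi (0 : ℝ) ha hb (sub_nonneg.2 ht.2) ht.1 (by ring)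
  set K := max K₀ K₁
  refine ⟨K, hK₀.trans (le_max_left _ _), fun t ht v hv => ⟨fun _ => ?_, fun hvW => ?_⟩⟩
  · have hK₀K : K₀ * P v v ≤ K * P v v := by gcongr; exacts [hP_nonneg v, le_max_left _ _]
    have hK₁K : K₁ * P v v ≤ K * P v v := by gcongr; exacts [hP_nonneg v, le_max_right _ _]
    calc 0 < (1 - t) * (ω₀ v (J₀ v) + K * P v v) + t * (ω₁ v (J₀ v) + K * P v v) :=
          hconvex ((hpos₀ v hv).trans_le (by linarith)) ((hpos₁ v hv).trans_le (by linarith)) ht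
      _ = _ := by simp only [P, LinearMap.compl₂_apply, LinearMap.compl₁₂_apply]; ring
  · exact hconvex (hWpos₀ v hvW hv) (hWpos₁ v hvW hv) ht

/-- Linear-algebraic core of the Thurston trick: V a finite-dimensional real vector
    space, J₀, J₁ complex structures, ω₀, ω₁ antisymmetric bilinear forms compatible
    with J₀, J₁ respectively, W a J₀- and J₁-invariant subspace on which both ω_i are
    J₀-positive, and β a bilinear form on V/W with β(πv, πJ_i v) > 0 for v ∉ W.
    Then there is K ≥ 0 such that for all t ∈ [0,1], ((1-t)ω₀ + tω₁ + K·π*β)(v, J₀v) > 0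
    for v ∉ W, and ((1-t)ω₀ + tω₁)(v, J₀v) > 0 for nonzero v ∈ W. -/
theorem stmt_13 {V : Type*} [AddCommGroup V] [Module ℝ V] [FiniteDimensional ℝ V]
    (J₀ J₁ : V →ₗ[ℝ] V)
    (hJ₀ : ∀ v, J₀ (J₀ v) = -v) (hJ₁ : ∀ v, J₁ (J₁ v) = -v)
    (ω₀ ω₁ : V →ₗ[ℝ] V →ₗ[ℝ] ℝ)
    (hω₀a : ∀ v w, ω₀ v w = -ω₀ w v) (hω₁a : ∀ v w, ω₁ v w = -ω₁ w v)
    (h₀ : ∀ v : V, v ≠ 0 → 0 < ω₀ v (J₀ v))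
    (h₁ : ∀ v : V, v ≠ 0 → 0 < ω₁ v (J₁ v))
    (W : Submodule ℝ V)
    (hW₀ : ∀ w ∈ W, J₀ w ∈ W) (hW₁ : ∀ w ∈ W, J₁ w ∈ W)
    (β : (V ⧸ W) →ₗ[ℝ] (V ⧸ W) →ₗ[ℝ] ℝ)
    (hβ₀ : ∀ v : V, v ∉ W → 0 < β (W.mkQ v) (W.mkQ (J₀ v)))
    (hβ₁ : ∀ v : V, v ∉ W → 0 < β (W.mkQ v) (W.mkQ (J₁ v)))
    (hWpos₀ : ∀ w ∈ W, w ≠ 0 → 0 < ω₀ w (J₀ w))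
    (hWpos₁ : ∀ w ∈ W, w ≠ 0 → 0 < ω₁ w (J₀ w)) :
    ∃ K : ℝ, 0 ≤ K ∧ ∀ t ∈ Set.Icc (0 : ℝ) 1, ∀ v : V, v ≠ 0 →
      (v ∉ W →
        0 < (1 - t) * ω₀ v (J₀ v) + t * ω₁ v (J₀ v)
            + K * β (W.mkQ v) (W.mkQ (J₀ v))) ∧
      (v ∈ W → 0 < (1 - t) * ω₀ v (J₀ v) + t * ω₁ v (J₀ v)) :=
  stmt_13_general J₀ ω₀ ω₁ W β hβ₀ hWpos₀ hWpos₁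
end

section
/- In H_2(S²×S², ℤ) with basis f, s (f² = s² = 0, f·s = 1), suppose K = 2f + 2s = [C_1] + [C_2] + [C_3] is a 3-cycle decomposition into sphere classes with all pairwise intersections equal to 1. Then up to permutation, ([C_1],[C_2],[C_3]) = (f + b s, f + (1−b) s, s) or the f↔s symmetric version, for some integer b. -/
/-!
Writing a class as `a f + b s`, the adjunction equality `C² + 2 = C·K` reads
`2ab + 2 = 2a + 2b`, i.e. `(a - 1)(b - 1) = 0`. So every class of the decomposition has a
coordinate equal to `1`. The three coordinates in each direction add up to `2`, so neither all
three `f`-coordinates nor all three `s`-coordinates equal `1`; after reordering (and possibly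
swapping `f` and `s`) the first two classes have `f`-coordinate `1` and the third has
`s`-coordinate `1`, and the sum condition then fixes the remaining coordinates.
-/

theorem pairSS_self_add_two_eq_iff (v : ℤ × ℤ) :
    pairSS v v + 2 = pairSS v KSS ↔ v.1 = 1 ∨ v.2 = 1 := by
  have hfactor : pairSS v v + 2 - pairSS v KSS = 2 * ((v.1 - 1) * (v.2 - 1)) := by
    simp only [pairSS, KSS]; ring
  rw [← sub_eq_zero, hfactor, mul_eq_zero, mul_eq_zero, sub_eq_zero, sub_eq_zero]
  simp

theorem exists_perm_fst_fst_snd_or_snd_snd_fst (C : Fin 3 → ℤ × ℤ)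
    (hC : ∀ i, (C i).1 = 1 ∨ (C i).2 = 1) (hsum : ∑ i, C i = KSS) :
    ∃ σ : Equiv.Perm (Fin 3),
      ((C (σ 0)).1 = 1 ∧ (C (σ 1)).1 = 1 ∧ (C (σ 2)).2 = 1) ∨
      ((C (σ 0)).2 = 1 ∧ (C (σ 1)).2 = 1 ∧ (C (σ 2)).1 = 1) := by
  rw [Fin.sum_univ_three, KSS, Prod.ext_iff] at hsum
  obtain ⟨hfst, hsnd⟩ := hsum
  simp only [Prod.fst_add, Prod.snd_add] at hfst hsnd
  rcases hC 0 with h0 | h0 <;> rcases hC 1 with h1 | h1 <;> rcases hC 2 with h2 | h2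
  · omega
  · exact ⟨1, Or.inl ⟨h0, h1, h2⟩⟩
  · exact ⟨Equiv.swap 1 2, Or.inl ⟨h0, h2, h1⟩⟩
  · exact ⟨finRotate 3, Or.inr ⟨h1, h2, h0⟩⟩
  · exact ⟨finRotate 3, Or.inl ⟨h1, h2, h0⟩⟩
  · exact ⟨Equiv.swap 1 2, Or.inr ⟨h0, h2, h1⟩⟩
  · exact ⟨1, Or.inr ⟨h0, h1, h2⟩⟩
  · omega

theorem eq_of_add_add_eq_KSS_of_fst_fst_snd {u v w : ℤ × ℤ} (hsum : u + v + w = KSS)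
    (hu : u.1 = 1) (hv : v.1 = 1) (hw : w.2 = 1) :
    u = (1, u.2) ∧ v = (1, 1 - u.2) ∧ w = (0, 1) := by
  rw [KSS, Prod.ext_iff] at hsum
  simp only [Prod.fst_add, Prod.snd_add] at hsum
  refine ⟨Prod.ext ?_ ?_, Prod.ext ?_ ?_, Prod.ext ?_ ?_⟩ <;> dsimp only <;> omega

theorem eq_of_add_add_eq_KSS_of_snd_snd_fst {u v w : ℤ × ℤ} (hsum : u + v + w = KSS)
    (hu : u.2 = 1) (hv : v.2 = 1) (hw : w.1 = 1) :
    u = (u.1, 1) ∧ v = (1 - u.1, 1) ∧ w = (1, 0) := by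
  rw [KSS, Prod.ext_iff] at hsum
  simp only [Prod.fst_add, Prod.snd_add] at hsum
  refine ⟨Prod.ext ?_ ?_, Prod.ext ?_ ?_, Prod.ext ?_ ?_⟩ <;> dsimp only <;> omega

theorem stmt_16_general (C : Fin 3 → ℤ × ℤ)
    (hadj : ∀ i, pairSS (C i) (C i) + 2 = pairSS (C i) KSS)
    (hsum : ∑ i, C i = KSS) :
    ∃ σ : Equiv.Perm (Fin 3), ∃ b : ℤ,
      (C (σ 0) = (1, b) ∧ C (σ 1) = (1, 1 - b) ∧ C (σ 2) = (0, 1)) ∨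
      (C (σ 0) = (b, 1) ∧ C (σ 1) = (1 - b, 1) ∧ C (σ 2) = (1, 0)) := by
  obtain ⟨σ, hσ⟩ := exists_perm_fst_fst_snd_or_snd_snd_fst C
    (fun i => (pairSS_self_add_two_eq_iff (C i)).1 (hadj i)) hsum
  have hsumσ : C (σ 0) + C (σ 1) + C (σ 2) = KSS := by
    rw [← hsum, ← Equiv.sum_comp σ C, Fin.sum_univ_three]
  rcases hσ with ⟨h0, h1, h2⟩ | ⟨h0, h1, h2⟩
  · exact ⟨σ, _, Or.inl (eq_of_add_add_eq_KSS_of_fst_fst_snd hsumσ h0 h1 h2)⟩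
  · exact ⟨σ, _, Or.inr (eq_of_add_add_eq_KSS_of_snd_snd_fst hsumσ h0 h1 h2)⟩

/-- Every 3-cycle decomposition of K = 2f + 2s into sphere classes with all pairwise
    intersections 1 is, up to permutation and the symmetry swapping f and s,
    (f + b·s, f + (1-b)·s, s) for some integer b. -/
theorem stmt_16 (C : Fin 3 → ℤ × ℤ)
    (hadj : ∀ i, pairSS (C i) (C i) + 2 = pairSS (C i) KSS)
    (hsum : ∑ i, C i = KSS)
    (hint : ∀ i j, i ≠ j → pairSS (C i) (C j) = 1) :
    ∃ σ : Equiv.Perm (Fin 3), ∃ b : ℤ,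
      (C (σ 0) = (1, b) ∧ C (σ 1) = (1, 1 - b) ∧ C (σ 2) = (0, 1)) ∨
      (C (σ 0) = (b, 1) ∧ C (σ 1) = (1 - b, 1) ∧ C (σ 2) = (1, 0)) :=
  stmt_16_general C hadj hsum
end
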